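/- arXiv:1811.11280 — 6 statements merged into one kernel-verified Lean document; each statement's English description precedes it below -/
import Mathlib

section
/- Let n, s be positive integers with gcd(n,s)=1 and let g(x) = Σ_{i=0}^{ν} r_i x^{2^{si}} with coefficients r_i in GF(2^n) be a linearized polynomial. Then the equation g(x)=0 has at most 2^ν solutions in GF(2^n). -/
/-!
Write `σ x = x ^ 2 ^ s`, so that `g = ∑ rᵢ σⁱ`. Since `gcd(n, s) = 1`, the fixed points of `σ` are
those of the Frobenius, i.e. `0` and `1`. If `a ≠ 0` is a root of `g`, summation by parts gives
`g (a z) = h (σ z - z)` with `h` a `σ`-polynomial of degree `ν - 1`, and `z ↦ σ z - z` is additive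
with kernel `{0, 1}`, hence at most 2-to-1. So `g` has at most twice as many roots as `h`, and
induction on `ν` gives the bound.
-/

open Finset Function

theorem AddMonoidHom.ncard_le_ncard_ker_mul_ncard {G H : Type*} [AddGroup G] [AddGroup H]
    [Finite G] [Finite H] (ψ : G →+ H) {Z : Set G} {T : Set H} (hZT : Set.MapsTo ψ Z T) :
    Z.ncard ≤ (ψ.ker : Set G).ncard * T.ncard := by
  classical
  have := Fintype.ofFinite G
  have := Fintype.ofFinite H
  simp only [Set.ncard_eq_toFinset_card']
  refine card_le_mul_card_image_of_maps_to (f := ψ) (fun z hz => ?_) _ fun b _ => ?_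
  · simpa using hZT (by simpa using hz)
  obtain hempty | ⟨z₀, hz₀⟩ := ({z ∈ Z.toFinset | ψ z = b}).eq_empty_or_nonempty
  · simp [hempty]
  have hfiber : {z ∈ Z.toFinset | ψ z = b} ⊆ (ψ.ker : Set G).toFinset.image (z₀ + ·) := by
    intro z hz
    simp only [mem_filter] at hz hz₀
    refine mem_image.2 ⟨-z₀ + z, ?_, add_neg_cancel_left z₀ z⟩
    simpa [ψ.eq_iff] using hz.2.trans hz₀.2.symm
  exact (card_le_card hfiber).trans card_image_le

theorem Finset.sum_range_succ_mul_eq_add_sum_Ioc_mul_sub {R : Type*} [CommRing R]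
    (c φ : ℕ → R) (N : ℕ) :
    ∑ t ∈ range (N + 1), c t * φ t = (∑ t ∈ range (N + 1), c t) * φ 0 +
      ∑ j ∈ range N, (∑ t ∈ Ioc j N, c t) * (φ (j + 1) - φ j) := by
  have h : ∑ j ∈ range N, (∑ t ∈ Ioc j N, c t) * (φ (j + 1) - φ j) =
      ∑ t ∈ range (N + 1), c t * (φ t - φ 0) := by
    simp_rw [sum_mul, ← sum_range_sub φ, mul_sum]
    refine sum_comm' fun j t => ?_
    simp only [mem_range, mem_Ioc]
    omega
  rw [h, sum_mul, ← sum_add_distrib]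
  exact sum_congr rfl fun t _ => by ring

section Linearized

variable {K : Type*} [Field K] (σ : K →+* K)

def linearizedEval (r : ℕ → K) (ν : ℕ) (x : K) : K :=
  ∑ i ∈ range (ν + 1), r i * (σ ^ i) x

theorem linearizedEval_mul (r : ℕ → K) (ν : ℕ) (a z : K) :
    linearizedEval σ r ν (a * z) = linearizedEval σ (fun i => r i * (σ ^ i) a) ν z := by
  simp only [linearizedEval, map_mul, mul_assoc]

theorem linearizedEval_succ (c : ℕ → K) (ν : ℕ) (z : K) :
    linearizedEval σ c (ν + 1) z = linearizedEval σ c (ν + 1) 1 * z +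
      linearizedEval σ (fun j => ∑ t ∈ Ioc j (ν + 1), c t) ν (σ z - z) := by
  simp only [linearizedEval, map_one, mul_one, map_sub]
  rw [sum_range_succ_mul_eq_add_sum_Ioc_mul_sub c (fun i => (σ ^ i) z)]
  simp [pow_succ, RingHom.mul_def]

theorem linearizedEval_mul_eq_of_eq_zero {r : ℕ → K} {ν : ℕ} {a : K}
    (ha : linearizedEval σ r (ν + 1) a = 0) (z : K) :
    linearizedEval σ r (ν + 1) (a * z) =
      linearizedEval σ (fun j => ∑ t ∈ Ioc j (ν + 1), r t * (σ ^ t) a) ν (σ z - z) := by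
  rw [linearizedEval_mul, linearizedEval_succ, ← linearizedEval_mul, mul_one, ha, zero_mul,
    zero_add]

theorem ncard_setOf_linearizedEval_eq_zero_le [Finite K] (r : ℕ → K) (ν : ℕ) (hr : r ν ≠ 0) :
    {x | linearizedEval σ r ν x = 0}.ncard ≤ (fixedPoints σ).ncard ^ ν := by
  induction ν generalizing r with
  | zero =>
    have h : {x | linearizedEval σ r 0 x = 0} ⊆ {0} := fun x hx => by
      simpa [linearizedEval, hr] using hx
    simpa using Set.ncard_le_ncard h
  | succ ν ih =>
    set S := {x | linearizedEval σ r (ν + 1) x = 0}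
    by_cases hS : S ⊆ {0}
    · have h0 : 0 < (fixedPoints σ).ncard := (Set.ncard_pos (Set.toFinite _)).2 ⟨0, map_zero σ⟩
      calc S.ncard ≤ 1 := by simpa using Set.ncard_le_ncard hS
        _ ≤ _ := Nat.one_le_pow _ _ h0
    obtain ⟨a, haS, ha0⟩ := Set.not_subset.1 hS
    set m := fun j => ∑ t ∈ Ioc j (ν + 1), r t * (σ ^ t) a
    have hm : m ν ≠ 0 := by
      simpa [m, Nat.Ioc_succ_singleton] using mul_ne_zero hr ((map_ne_zero (σ ^ (ν + 1))).2 ha0)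
    let ψ : K →+ K := σ.toAddMonoidHom - AddMonoidHom.id K
    have hker : (ψ.ker : Set K) = fixedPoints σ := by
      ext x
      simp [ψ, sub_eq_zero, IsFixedPt]
    have hmaps : Set.MapsTo ψ ((a * ·) ⁻¹' S) {y | linearizedEval σ m ν y = 0} := fun z hz => by
      simpa [ψ, S, m, linearizedEval_mul_eq_of_eq_zero σ haS] using hz
    calc S.ncard = ((a * ·) ⁻¹' S).ncard :=
          (Set.ncard_preimage_of_injective_subset_range (mul_right_injective₀ ha0)
            fun x _ => ⟨a⁻¹ * x, mul_inv_cancel_left₀ ha0 x⟩).symm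
      _ ≤ (fixedPoints σ).ncard * {y | linearizedEval σ m ν y = 0}.ncard :=
          hker ▸ ψ.ncard_le_ncard_ker_mul_ncard hmaps
      _ ≤ (fixedPoints σ).ncard * (fixedPoints σ).ncard ^ ν := Nat.mul_le_mul_left _ (ih m hm)
      _ = (fixedPoints σ).ncard ^ (ν + 1) := (pow_succ' _ _).symm

end Linearized

theorem FiniteField.fixedPoints_frobenius_pow {K : Type*} [Field K] [Finite K] {p n s : ℕ}
    [Fact p.Prime] [CharP K p] (hcard : Nat.card K = p ^ n) (hcop : n.Coprime s) :
    fixedPoints ⇑(frobenius K p ^ s) = fixedPoints (frobenius K p) := by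
  have := Fintype.ofFinite K
  have hn : frobenius K p ^ n = 1 := frobenius_pow (by rwa [← Nat.card_eq_fintype_card])
  ext x
  simp only [mem_fixedPoints, RingHom.coe_pow]
  refine ⟨fun hs => ?_, fun h1 => h1.iterate s⟩
  have hx : IsPeriodicPt (frobenius K p) n x := by
    simp [IsPeriodicPt, IsFixedPt, ← RingHom.coe_pow, hn]
  simpa [IsPeriodicPt, hcop.gcd_eq_one] using hx.gcd hs

theorem fixedPoints_frobenius_two {K : Type*} [Field K] [CharP K 2] :
    fixedPoints (frobenius K 2) = {0, 1} := by
  ext x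
  simp [IsFixedPt, frobenius_def, ← IsIdempotentElem.iff_eq_zero_or_one, IsIdempotentElem, sq]

theorem root_bound_linearized_general
    (n s ν : ℕ) (hn : 0 < n) (hcop : Nat.gcd n s = 1)
    (r : Fin (ν + 1) → GaloisField 2 n) (hlead : r (Fin.last ν) ≠ 0) :
    Set.ncard {x : GaloisField 2 n |
      ∑ i : Fin (ν + 1), r i * x ^ (2 ^ (s * (i : ℕ))) = 0} ≤ 2 ^ ν := by
  let σ := frobenius (GaloisField 2 n) 2 ^ s
  let r' : ℕ → GaloisField 2 n := fun i => if h : i < ν + 1 then r ⟨i, h⟩ else 0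
  have hroots : {x : GaloisField 2 n | ∑ i : Fin (ν + 1), r i * x ^ (2 ^ (s * (i : ℕ))) = 0} =
      {x | linearizedEval σ r' ν x = 0} := by
    ext x
    simp [linearizedEval, ← Fin.sum_univ_eq_sum_range, r', σ, ← pow_mul, iterate_frobenius,
      Fin.is_le]
  have hfix : (fixedPoints σ).ncard = 2 := by
    rw [FiniteField.fixedPoints_frobenius_pow (GaloisField.card 2 n hn.ne') hcop,
      fixedPoints_frobenius_two, Set.ncard_pair zero_ne_one]
  rw [hroots]
  calc _ ≤ (fixedPoints σ).ncard ^ ν :=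
        ncard_setOf_linearizedEval_eq_zero_le σ r' ν (by simpa [r', Fin.last] using hlead)
    _ = 2 ^ ν := by rw [hfix]

theorem root_bound_linearized
    (n s ν : ℕ) (hn : 0 < n) (hs : 0 < s) (hcop : Nat.gcd n s = 1)
    (r : Fin (ν + 1) → GaloisField 2 n) (hlead : r (Fin.last ν) ≠ 0) :
    Set.ncard {x : GaloisField 2 n |
      ∑ i : Fin (ν + 1), r i * x ^ (2 ^ (s * (i : ℕ))) = 0} ≤ 2 ^ ν :=
  root_bound_linearized_general n s ν hn hcop r hlead
end

section
/- Let n > i_0 > i_1 > ... > i_{t-1} ≥ 0 be integers and suppose K = (k, k_0, ..., k_{t-1}) is an integer tuple with i_j + k + k_j·n ≥ 0 for all j, which minimizes V_K = max_j (i_j + k + k_j·n)/S_K, where T_K = gcd_j(i_j + k + k_j·n) and S_K = T_K/gg(T_K, n). Then min_j (i_j + k + k_j·n) = 0. -/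
/-- `gg A B = ∏_{p prime, p ∣ B} p ^ (v_p A)`; `A / gg A B` is the greatest
divisor of `A` coprime to `B`. -/
def gg (A B : ℕ) : ℕ :=
  ∏ p ∈ B.primeFactors, p ^ (A.factorization p)

/-- The quantity `V_K = max_j (i_j + k + k_j n) / S_K`, where
`T_K = gcd_j (i_j + k + k_j n)` and `S_K = T_K / gg(T_K, n)`. -/
def Vval {t : ℕ} (n : ℕ) (i : Fin t → ℕ) (k : ℤ) (kk : Fin t → ℤ) : ℕ :=
  let e : Fin t → ℕ := fun j => ((i j : ℤ) + k + kk j * n).toNat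
  let T : ℕ := Finset.univ.gcd e
  let S : ℕ := T / gg T n
  Finset.univ.sup fun j => e j / S

lemma gg_pos (A B : ℕ) : 0 < gg A B :=
  Finset.prod_pos fun p hp => pow_pos (Nat.prime_of_mem_primeFactors hp).pos _

lemma gg_factorization (A B q : ℕ) :
    (gg A B).factorization q = if q ∈ B.primeFactors then A.factorization q else 0 := by
  unfold gg
  rw [Nat.factorization_prod
    (fun p hp => pow_ne_zero _ (Nat.prime_of_mem_primeFactors hp).pos.ne')]
  rw [Finset.sum_apply']
  rw [Finset.sum_congr rfl (fun p hp => by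
    rw [(Nat.prime_of_mem_primeFactors hp).factorization_pow, Finsupp.single_apply])]
  exact Finset.sum_ite_eq' _ _ _

lemma gg_dvd (A B : ℕ) : gg A B ∣ A := by
  rcases eq_or_ne A 0 with rfl | hA
  · exact dvd_zero _
  · rw [← Nat.factorization_le_iff_dvd (gg_pos A B).ne' hA]
    intro q
    rw [gg_factorization]
    split <;> simp

lemma div_gg_factorization_eq_zero {A B q : ℕ} (hA : A ≠ 0) (hq : q ∈ B.primeFactors) :
    (A / gg A B).factorization q = 0 := by
  rw [Nat.factorization_div (gg_dvd A B), Finsupp.tsub_apply, gg_factorization, if_pos hq,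
    Nat.sub_self]

lemma dvd_div_gg {S T n : ℕ} (hT : T ≠ 0) (hS : S ∣ T)
    (hcop : ∀ q ∈ n.primeFactors, S.factorization q = 0) : S ∣ T / gg T n := by
  have hS0 : S ≠ 0 := fun h => hT (by simpa [h] using hS)
  have hq0 : T / gg T n ≠ 0 := by
    rw [Nat.div_ne_zero_iff_of_dvd (gg_dvd T n)]
    exact ⟨hT, (gg_pos T n).ne'⟩
  rw [← Nat.factorization_le_iff_dvd hS0 hq0]
  intro q
  rw [Nat.factorization_div (gg_dvd T n), Finsupp.tsub_apply, gg_factorization]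
  split
  · next h => simp [hcop q h]
  · simpa using (Nat.factorization_le_iff_dvd hS0 hT).2 hS q

theorem minimizer_attains_zero (n t : ℕ) (ht : 0 < t)
    (i : Fin t → ℕ) (hanti : StrictAnti i) (hlt : ∀ j, i j < n)
    (k : ℤ) (kk : Fin t → ℤ)
    (hadm : ∀ j, 0 ≤ (i j : ℤ) + k + kk j * n)
    (hmin : ∀ (k' : ℤ) (kk' : Fin t → ℤ),
      (∀ j, 0 ≤ (i j : ℤ) + k' + kk' j * n) →
      Vval n i k kk ≤ Vval n i k' kk') :
    ∃ j, (i j : ℤ) + k + kk j * n = 0 := by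
  set e : Fin t → ℕ := fun j => ((i j : ℤ) + k + kk j * n).toNat with he
  have he' : ∀ j, ((e j : ℤ)) = (i j : ℤ) + k + kk j * n :=
    fun j => Int.toNat_of_nonneg (hadm j)
  obtain ⟨j0, -, hj0⟩ := Finset.exists_min_image Finset.univ e ⟨⟨0, ht⟩, Finset.mem_univ _⟩
  by_cases h0 : e j0 = 0
  · exact ⟨j0, by have := he' j0; rw [h0] at this; exact this.symm.trans (by norm_num)⟩
  exfalso
  set m := e j0 with hm'
  have hm : 0 < m := Nat.pos_of_ne_zero h0
  have hjm : ∀ j, m ≤ e j := fun j => hj0 j (Finset.mem_univ j)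
  have hadm' : ∀ j, 0 ≤ (i j : ℤ) + (k - m) + kk j * n := by
    intro j
    have h1 := he' j
    have h2 : (m : ℤ) ≤ (e j : ℤ) := by exact_mod_cast hjm j
    linarith
  have hle := hmin (k - m) kk hadm'
  have he2 : ∀ j, ((i j : ℤ) + (k - m) + kk j * n).toNat = e j - m := by
    intro j
    have h1 := he' j
    have h2 := hjm j
    omega
  set T : ℕ := Finset.univ.gcd e with hT'
  set S : ℕ := T / gg T n with hS'
  have hVk : Vval n i k kk = Finset.univ.sup fun j => e j / S := rfl
  have hVk' : Vval n i (k - m) kk =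
      Finset.univ.sup fun j =>
        (e j - m) / (Finset.univ.gcd (fun j => e j - m) / gg (Finset.univ.gcd fun j => e j - m) n) := by
    simp only [Vval, he2]
  rw [hVk, hVk'] at hle
  set T2 : ℕ := Finset.univ.gcd (fun j => e j - m) with hT2'
  set S2 : ℕ := T2 / gg T2 n with hS2'
  have hT : T ≠ 0 := fun h => h0 (Finset.gcd_eq_zero_iff.1 h j0 (Finset.mem_univ _))
  have hTe : ∀ j, T ∣ e j := fun j => Finset.gcd_dvd (Finset.mem_univ j)
  have hST : S ∣ T := Nat.div_dvd_of_dvd (gg_dvd T n)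
  have hSpos : 0 < S :=
    Nat.div_pos (Nat.le_of_dvd (Nat.pos_of_ne_zero hT) (gg_dvd T n)) (gg_pos T n)
  have hSe : ∀ j, S ∣ e j := fun j => hST.trans (hTe j)
  obtain ⟨jM, -, hjM⟩ := Finset.exists_max_image Finset.univ e ⟨j0, Finset.mem_univ _⟩
  have hjM' : ∀ j, e j ≤ e jM := fun j => hjM j (Finset.mem_univ j)
  have hVlow : e jM / S ≤ Finset.univ.sup fun j => e j / S :=
    Finset.le_sup (f := fun j => e j / S) (Finset.mem_univ jM)
  by_cases hMm : e jM = m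
  · -- all values equal to m
    have hall : ∀ j, e j = m := fun j => le_antisymm (hMm ▸ hjM' j) (hjm j)
    have hT20 : T2 = 0 := Finset.gcd_eq_zero_iff.2 fun j _ => by rw [hall j, Nat.sub_self]
    have hV2 : (Finset.univ.sup fun j => (e j - m) / S2) = 0 := by
      apply Nat.le_antisymm _ (Nat.zero_le _)
      apply Finset.sup_le
      intro j _
      rw [hall j, Nat.sub_self, Nat.zero_div]
    rw [hV2] at hle
    have h1 : 1 ≤ e jM / S := (Nat.one_le_div_iff hSpos).2 (Nat.le_of_dvd (by omega) (hSe jM))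
    omega
  · have hMgt : m < e jM := lt_of_le_of_ne (hjm jM) (Ne.symm hMm)
    have hT2 : T2 ≠ 0 := by
      intro h
      have := Finset.gcd_eq_zero_iff.1 h jM (Finset.mem_univ _)
      omega
    have hTT2 : T ∣ T2 :=
      Finset.dvd_gcd fun j _ => Nat.dvd_sub (hTe j) (hTe j0)
    have hSS2 : S ∣ S2 := by
      rw [hS2']
      exact dvd_div_gg hT2 (hST.trans hTT2) fun q hq => div_gg_factorization_eq_zero hT hq
    have hS2pos : 0 < S2 :=
      Nat.div_pos (Nat.le_of_dvd (Nat.pos_of_ne_zero hT2) (gg_dvd T2 n)) (gg_pos T2 n)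
    have hVup : (Finset.univ.sup fun j => (e j - m) / S2) ≤ (e jM - m) / S2 := by
      apply Finset.sup_le
      intro j _
      exact Nat.div_le_div_right (Nat.sub_le_sub_right (hjM' j) m)
    have h2 : (e jM - m) / S2 ≤ (e jM - m) / S :=
      Nat.div_le_div_left (Nat.le_of_dvd hS2pos hSS2) hSpos
    have h3 : (e jM - m) / S < e jM / S :=
      Nat.div_lt_div_of_lt_of_dvd (hSe jM) (by omega)
    omega
end

section
/- Let n > i_0 > i_1 > ... > i_{t-1} ≥ 0 be integers. For the tuple K_0 = (-i_{t-1}, -⌊(i_0-i_{t-1})/n⌋, ..., -⌊(i_{t-2}-i_{t-1})/n⌋, 0) one has i_j + k + k_j·n ≥ 0 for all j, and V_{K_0} ≤ (i_0 - i_{t-1}) mod n < n, where V_K = max_j (i_j + k + k_j·n)/S_K with T_K = gcd_j(i_j + k + k_j·n) and S_K = T_K/gg(T_K,n). -/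
theorem K0_admissible_and_V_lt_n (n t : ℕ)
    (i : Fin (t + 1) → ℕ) (hanti : StrictAnti i) (hlt : ∀ j, i j < n)
    (k : ℤ) (kk : Fin (t + 1) → ℤ)
    (hk : k = -(i (Fin.last t) : ℤ))
    (hkk : ∀ j, kk j = -(((i j : ℤ) - (i (Fin.last t) : ℤ)) / n)) :
    (∀ j, 0 ≤ (i j : ℤ) + k + kk j * n) ∧
      Vval n i k kk ≤ (((i 0 : ℤ) - (i (Fin.last t) : ℤ)) % n).toNat ∧
      (((i 0 : ℤ) - (i (Fin.last t) : ℤ)) % n).toNat < n := by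
  have hmono : ∀ j : Fin (t + 1), i (Fin.last t) ≤ i j := fun j =>
    hanti.antitone (Fin.le_last j)
  have hbound : ∀ j : Fin (t + 1), (0:ℤ) ≤ (i j : ℤ) - i (Fin.last t) ∧
      (i j : ℤ) - i (Fin.last t) < n := by
    intro j
    have h1 := hmono j
    have h2 := hlt j
    constructor <;> [skip; skip] <;> push_cast <;> omega
  have hd : ∀ j, (i j : ℤ) + k + kk j * n = (i j : ℤ) - i (Fin.last t) := by
    intro j
    rw [hk, hkk j]
    have h := hbound j
    rw [Int.ediv_eq_zero_of_lt h.1 h.2]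
    ring
  have hnonneg : ∀ j, 0 ≤ (i j : ℤ) + k + kk j * n := by
    intro j; rw [hd j]; exact (hbound j).1
  have hmod : ((i 0 : ℤ) - (i (Fin.last t) : ℤ)) % n = (i 0 : ℤ) - i (Fin.last t) :=
    Int.emod_eq_of_lt (hbound 0).1 (hbound 0).2
  refine ⟨hnonneg, ?_, ?_⟩
  · rw [hmod]
    apply Finset.sup_le
    intro j _
    calc ((i j : ℤ) + k + kk j * n).toNat / _ ≤ ((i j : ℤ) + k + kk j * n).toNat :=
          Nat.div_le_self _ _
      _ ≤ ((i 0 : ℤ) - (i (Fin.last t) : ℤ)).toNat := by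
          rw [hd j]
          apply Int.toNat_le_toNat
          have := hmono j
          have := hanti.antitone (Fin.zero_le j)
          push_cast; omega
  · rw [hmod]
    have h := hbound 0
    omega
end

section
/- Let a be a nonzero element of GF(2^n). Over GF(2^n), the polynomial a^8 x^16 + (a^16 + a^2) x^8 + (a^8 + a) x^2 + a^2 x factors as a·x·(a+x)·(a(ax+x^2)^3 + 1)·(a^5(ax+x^2)(a(ax+x^2)^3+1) + 1); in particular, x ∈ GF(2^n) is a root if and only if (ax+x^2)·((ax+x^2)^3 + 1/a)·((ax+x^2)^4 + (1/a)(ax+x^2) + 1/a^6) = 0. -/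
theorem factorization_f7_kernel (n : ℕ) (hn : 0 < n)
    (a : GaloisField 2 n) (ha : a ≠ 0) :
    (∀ x : GaloisField 2 n,
      a ^ 8 * x ^ 16 + (a ^ 16 + a ^ 2) * x ^ 8 + (a ^ 8 + a) * x ^ 2 + a ^ 2 * x =
        a * x * (a + x) * (a * (a * x + x ^ 2) ^ 3 + 1) *
          (a ^ 5 * (a * x + x ^ 2) * (a * (a * x + x ^ 2) ^ 3 + 1) + 1)) ∧
    (∀ x : GaloisField 2 n,
      a ^ 8 * x ^ 16 + (a ^ 16 + a ^ 2) * x ^ 8 + (a ^ 8 + a) * x ^ 2 + a ^ 2 * x = 0 ↔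
        (a * x + x ^ 2) * ((a * x + x ^ 2) ^ 3 + a⁻¹) *
          ((a * x + x ^ 2) ^ 4 + a⁻¹ * (a * x + x ^ 2) + (a ^ 6)⁻¹) = 0) := by
  have h2 : (2 : GaloisField 2 n) = 0 := by
    have := CharP.cast_eq_zero (GaloisField 2 n) 2
    exact_mod_cast this
  have h1 : ∀ x : GaloisField 2 n,
      a ^ 8 * x ^ 16 + (a ^ 16 + a ^ 2) * x ^ 8 + (a ^ 8 + a) * x ^ 2 + a ^ 2 * x =
        a * x * (a + x) * (a * (a * x + x ^ 2) ^ 3 + 1) *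
          (a ^ 5 * (a * x + x ^ 2) * (a * (a * x + x ^ 2) ^ 3 + 1) + 1) := by
    intro x
    linear_combination ((-2 : GaloisField 2 n)*a^3*x^7 + (-3)*a^4*x^6 + (-2)*a^5*x^5 + (-1)*a^6*x^4 + (-1)*a^7*x^3 + (-1)*a^7*x^10 + (-5)*a^8*x^9 + (-10)*a^9*x^8 + (-4)*a^9*x^15 + (-10)*a^10*x^7 + (-14)*a^10*x^14 + (-5)*a^11*x^6 + (-28)*a^11*x^13 + (-35)*a^12*x^12 + (-1)*a^12*x^5 + (-28)*a^13*x^11 + (-14)*a^14*x^10 + (-4)*a^15*x^9) * h2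
  refine ⟨h1, fun x => ?_⟩
  have key : a * x * (a + x) * (a * (a * x + x ^ 2) ^ 3 + 1) *
          (a ^ 5 * (a * x + x ^ 2) * (a * (a * x + x ^ 2) ^ 3 + 1) + 1) =
      a ^ 8 * ((a * x + x ^ 2) * ((a * x + x ^ 2) ^ 3 + a⁻¹) *
          ((a * x + x ^ 2) ^ 4 + a⁻¹ * (a * x + x ^ 2) + (a ^ 6)⁻¹)) := by
    field_simp
  rw [h1 x, key, mul_eq_zero]
  simp [pow_ne_zero 8 ha]
end

section
/- Let n = 4 and a ∈ GF(2^4) with a ∉ {0,1}. The set of x ∈ GF(2^4) satisfying (a^2+a^4)x^8 + (a^2+a^4)^2 x^2 + (a^8+a^2)x^4 = 0 is exactly {0, 1, a, 1+a}; indeed the polynomial equals ((a+a^2)(x^2+x)(x^2+x+a^2+a))^2, and the root set of (x^2+x)(x^2+x+a^2+a) in GF(2^4) is {0,1,a,1+a}. -/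
theorem kernel_of_f_n4 (a : GaloisField 2 4) (ha0 : a ≠ 0) (ha1 : a ≠ 1) :
    (∀ x : GaloisField 2 4,
      (a ^ 2 + a ^ 4) * x ^ 8 + (a ^ 2 + a ^ 4) ^ 2 * x ^ 2 + (a ^ 8 + a ^ 2) * x ^ 4 =
        ((a + a ^ 2) * (x ^ 2 + x) * (x ^ 2 + x + a ^ 2 + a)) ^ 2) ∧
    {x : GaloisField 2 4 |
      (a ^ 2 + a ^ 4) * x ^ 8 + (a ^ 2 + a ^ 4) ^ 2 * x ^ 2 + (a ^ 8 + a ^ 2) * x ^ 4 = 0} =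
      {0, 1, a, 1 + a} ∧
    {x : GaloisField 2 4 | (x ^ 2 + x) * (x ^ 2 + x + a ^ 2 + a) = 0} =
      {0, 1, a, 1 + a} := by
  have h2 : (2 : GaloisField 2 4) = 0 := by
    exact_mod_cast CharP.cast_eq_zero (GaloisField 2 4) 2
  have hna : (1 : GaloisField 2 4) + a ≠ 0 := by
    intro h
    apply ha1
    linear_combination h - h2
  have hfac : ∀ x : GaloisField 2 4,
      (x ^ 2 + x) * (x ^ 2 + x + a ^ 2 + a) = x * (x + 1) * (x + a) * (x + 1 + a) := by
    intro x
    linear_combination ((-1 : GaloisField 2 4) * a * x^2 + (-1) * a * x^3) * h2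
  have hroots : ∀ x : GaloisField 2 4,
      (x ^ 2 + x) * (x ^ 2 + x + a ^ 2 + a) = 0 ↔ x = 0 ∨ x = 1 ∨ x = a ∨ x = 1 + a := by
    intro x
    rw [hfac x, mul_eq_zero, mul_eq_zero, mul_eq_zero]
    constructor
    · rintro (((h | h) | h) | h)
      · exact Or.inl h
      · exact Or.inr (Or.inl (by linear_combination h - h2))
      · exact Or.inr (Or.inr (Or.inl (by linear_combination h - a * h2)))
      · exact Or.inr (Or.inr (Or.inr (by linear_combination h - (1 + a) * h2)))
    · rintro (h | h | h | h)
      · exact Or.inl (Or.inl (Or.inl h))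
      · exact Or.inl (Or.inl (Or.inr (by linear_combination h + h2)))
      · exact Or.inl (Or.inr (by linear_combination h + a * h2))
      · exact Or.inr (by linear_combination h + (1 + a) * h2)
  have heq : ∀ x : GaloisField 2 4,
      (a ^ 2 + a ^ 4) * x ^ 8 + (a ^ 2 + a ^ 4) ^ 2 * x ^ 2 + (a ^ 8 + a ^ 2) * x ^ 4 =
        ((a + a ^ 2) * (x ^ 2 + x) * (x ^ 2 + x + a ^ 2 + a)) ^ 2 := by
    intro x
    linear_combination ((-2) * a^2 * x^5 + (-3) * a^2 * x^6 + (-2) * a^2 * x^7 + (-1) * a^3 * x^3 +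
      (-4) * a^3 * x^4 + (-7) * a^3 * x^5 + (-7) * a^3 * x^6 + (-4) * a^3 * x^7 + (-1) * a^3 * x^8 +
      (-4) * a^4 * x^3 + (-10) * a^4 * x^4 + (-11) * a^4 * x^5 + (-6) * a^4 * x^6 +
      (-2) * a^4 * x^7 + (-2) * a^5 * x^2 + (-7) * a^5 * x^3 + (-11) * a^5 * x^4 +
      (-9) * a^5 * x^5 + (-3) * a^5 * x^6 + (-2) * a^6 * x^2 + (-7) * a^6 * x^3 +
      (-6) * a^6 * x^4 + (-3) * a^6 * x^5 + (-1) * a^6 * x^6 + (-2) * a^7 * x^2 +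
      (-4) * a^7 * x^3 + (-2) * a^7 * x^4 + (-1 : GaloisField 2 4) * a^8 * x^3) * h2
  have haa : a + a ^ 2 ≠ 0 := by
    intro h
    have : a * (1 + a) = 0 := by linear_combination h
    rcases mul_eq_zero.mp this with h' | h'
    · exact ha0 h'
    · exact hna h'
  refine ⟨heq, ?_, ?_⟩
  · ext x
    simp only [Set.mem_setOf_eq, Set.mem_insert_iff, Set.mem_singleton_iff]
    rw [heq x, pow_eq_zero_iff (by norm_num), mul_eq_zero, mul_eq_zero]
    rw [← hroots x, mul_eq_zero]
    constructor
    · rintro ((h | h) | h)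
      · exact absurd h haa
      · exact Or.inl h
      · exact Or.inr h
    · rintro (h | h)
      · exact Or.inl (Or.inr h)
      · exact Or.inr h
  · ext x
    simp only [Set.mem_setOf_eq, Set.mem_insert_iff, Set.mem_singleton_iff]
    exact hroots x
end

section
/- Let n, r be positive integers with 3r = n and μ ∈ GF(2^n) with Tr^n_r(μ) ≠ 0, where Tr^n_r is the trace from GF(2^n) to GF(2^r). Set p = 2^r. Then for every nonzero a ∈ GF(2^n), the equation μ^{p^2}(a x^p + a^p x)^{p^3} + μ^p (a x^{p^2} + a^{p^2} x)^p + μ (a x^p + a^p x) = 0 reduces to (μ^{p^2} + μ^p + μ)(a x^p + a^p x) = 0 and hence has exactly p = 2^r solutions x ∈ GF(2^n), namely x ∈ a·GF(2^r). -/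
open Polynomial

lemma card_fixed_pow (K : Type*) [Field K] [Fintype K] [DecidableEq K] (q : ℕ) (hq : 2 ≤ q)
    (hcard : Fintype.card K = q ^ 3) : {y : K | y ^ q = y}.ncard = q := by
  obtain ⟨q', rfl⟩ : ∃ q', q = q' + 1 := ⟨q - 1, by omega⟩
  set q := q' + 1
  have hFdvd : (X ^ q - X : K[X]) ∣ (X ^ (q ^ 3) - X) := by
    have h1 : (X ^ q - X : K[X]) = X * (X ^ q' - 1) := by
      rw [mul_sub, mul_one, ← pow_succ']
    have h2 : (X ^ (q ^ 3) - X : K[X]) = X * ((X ^ q') ^ (q' ^ 2 + 3 * q' + 3) - 1) := by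
      rw [mul_sub, mul_one, ← pow_mul, ← pow_succ']
      congr 2
      ring
    rw [h1, h2]
    exact mul_dvd_mul_left _ (by simpa using sub_dvd_pow_sub_pow (X ^ q' : K[X]) 1 (q' ^ 2 + 3 * q' + 3))
  obtain ⟨H, hH⟩ := hFdvd
  have hG : (X ^ (q ^ 3) - X : K[X]).roots = Finset.univ.val := by
    rw [← hcard]; exact FiniteField.roots_X_pow_card_sub_X K
  have hGne : (X ^ (q ^ 3) - X : K[X]) ≠ 0 :=
    FiniteField.X_pow_card_sub_X_ne_zero K (Nat.one_lt_pow three_ne_zero hq)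
  have hFne : (X ^ q - X : K[X]) ≠ 0 := FiniteField.X_pow_card_sub_X_ne_zero K hq
  have hHne : H ≠ 0 := by rintro rfl; simp [hH] at hGne
  have hroots : (X ^ (q ^ 3) - X : K[X]).roots = (X ^ q - X : K[X]).roots + H.roots := by
    rw [hH, roots_mul (hH ▸ hGne)]
  have hFdeg : (X ^ q - X : K[X]).natDegree = q := FiniteField.X_pow_card_sub_X_natDegree_eq K hq
  have hGdeg : (X ^ (q ^ 3) - X : K[X]).natDegree = q ^ 3 :=
    FiniteField.X_pow_card_sub_X_natDegree_eq K (Nat.one_lt_pow three_ne_zero hq)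
  have hHdeg : H.natDegree = q ^ 3 - q := by
    have := natDegree_mul hFne hHne
    rw [← hH, hGdeg, hFdeg] at this
    omega
  have hGcard : Multiset.card (X ^ (q ^ 3) - X : K[X]).roots = q ^ 3 := by
    rw [hG]; simpa using hcard
  have hFcard : Multiset.card (X ^ q - X : K[X]).roots = q := by
    have h1 : Multiset.card (X ^ q - X : K[X]).roots ≤ q := (card_roots' _).trans_eq hFdeg
    have h2 : Multiset.card H.roots ≤ q ^ 3 - q := (card_roots' _).trans_eq hHdeg
    have h3 : Multiset.card (X ^ q - X : K[X]).roots + Multiset.card H.roots = q ^ 3 := by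
      rw [← Multiset.card_add, ← hroots, hGcard]
    have hq3 : q ≤ q ^ 3 := Nat.le_self_pow three_ne_zero q
    omega
  have hnodup : (X ^ q - X : K[X]).roots.Nodup := by
    have : (X ^ q - X : K[X]).roots ≤ (X ^ (q ^ 3) - X : K[X]).roots := by
      rw [hroots]; exact Multiset.le_add_right _ _
    exact Multiset.nodup_of_le this (hG ▸ Finset.univ.nodup)
  have hset : {y : K | y ^ q = y} = ↑((X ^ q - X : K[X]).roots.toFinset) := by
    ext y
    simp [mem_roots, hFne, sub_eq_zero]
  rw [hset, Set.ncard_coe_finset, Multiset.toFinset_card_of_nodup hnodup, hFcard]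

theorem kernel_case_n_eq_3r (n r : ℕ) (hr : 0 < r) (h3r : n = 3 * r)
    (p : ℕ) (hp : p = 2 ^ r)
    (μ : GaloisField 2 n)
    -- `Tr^n_r(μ) = μ + μ^p + μ^{p^2} ≠ 0`
    (htr : μ + μ ^ p + μ ^ p ^ 2 ≠ 0)
    (a : GaloisField 2 n) (ha : a ≠ 0) :
    (∀ x : GaloisField 2 n,
      μ ^ p ^ 2 * (a * x ^ p + a ^ p * x) ^ p ^ 3 +
          μ ^ p * (a * x ^ p ^ 2 + a ^ p ^ 2 * x) ^ p +
          μ * (a * x ^ p + a ^ p * x) = 0 ↔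
        (μ ^ p ^ 2 + μ ^ p + μ) * (a * x ^ p + a ^ p * x) = 0) ∧
    {x : GaloisField 2 n |
        μ ^ p ^ 2 * (a * x ^ p + a ^ p * x) ^ p ^ 3 +
          μ ^ p * (a * x ^ p ^ 2 + a ^ p ^ 2 * x) ^ p +
          μ * (a * x ^ p + a ^ p * x) = 0} =
      (fun y => a * y) '' {y : GaloisField 2 n | y ^ (2 ^ r) = y} ∧
    Set.ncard {x : GaloisField 2 n |
        μ ^ p ^ 2 * (a * x ^ p + a ^ p * x) ^ p ^ 3 +
          μ ^ p * (a * x ^ p ^ 2 + a ^ p ^ 2 * x) ^ p +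
          μ * (a * x ^ p + a ^ p * x) = 0} = 2 ^ r := by
  subst h3r hp
  classical
  haveI : Fintype (GaloisField 2 (3 * r)) := Fintype.ofFinite _
  have hq2 : 2 ≤ 2 ^ r := by
    calc 2 = 2 ^ 1 := (pow_one 2).symm
    _ ≤ 2 ^ r := Nat.pow_le_pow_right (by norm_num) hr
  have hcard : Fintype.card (GaloisField 2 (3 * r)) = (2 ^ r) ^ 3 := by
    rw [← Nat.card_eq_fintype_card, GaloisField.card 2 (3 * r) (by omega), ← pow_mul, mul_comm]
  have hpow3 : ∀ y : GaloisField 2 (3 * r), y ^ (2 ^ r) ^ 3 = y := by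
    intro y
    rw [← hcard, FiniteField.pow_card]
  have hadd : ∀ u v : GaloisField 2 (3 * r), (u + v) ^ 2 ^ r = u ^ 2 ^ r + v ^ 2 ^ r := by
    intro u v
    exact add_pow_char_pow ..
  have e23 : ((2 : ℕ) ^ r) ^ 2 * 2 ^ r = (2 ^ r) ^ 3 := (pow_succ _ 2).symm
  -- the key algebraic reduction
  have key : ∀ x : GaloisField 2 (3 * r),
      μ ^ (2 ^ r) ^ 2 * (a * x ^ 2 ^ r + a ^ 2 ^ r * x) ^ (2 ^ r) ^ 3 +
          μ ^ 2 ^ r * (a * x ^ (2 ^ r) ^ 2 + a ^ (2 ^ r) ^ 2 * x) ^ 2 ^ r +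
          μ * (a * x ^ 2 ^ r + a ^ 2 ^ r * x) =
        (μ ^ (2 ^ r) ^ 2 + μ ^ 2 ^ r + μ) * (a * x ^ 2 ^ r + a ^ 2 ^ r * x) := by
    intro x
    have h1 : (a * x ^ 2 ^ r + a ^ 2 ^ r * x) ^ (2 ^ r) ^ 3 = a * x ^ 2 ^ r + a ^ 2 ^ r * x :=
      hpow3 _
    have h2 : (a * x ^ (2 ^ r) ^ 2 + a ^ (2 ^ r) ^ 2 * x) ^ 2 ^ r
        = a * x ^ 2 ^ r + a ^ 2 ^ r * x := by
      rw [hadd, mul_pow, mul_pow, ← pow_mul x, ← pow_mul a, e23, hpow3 x, hpow3 a]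
      ring
    rw [h1, h2]
    ring
  have hc : (μ ^ (2 ^ r) ^ 2 + μ ^ 2 ^ r + μ) ≠ 0 := by
    intro h
    apply htr
    rw [← h]; ring
  have hset : {x : GaloisField 2 (3 * r) |
        μ ^ (2 ^ r) ^ 2 * (a * x ^ 2 ^ r + a ^ 2 ^ r * x) ^ (2 ^ r) ^ 3 +
          μ ^ 2 ^ r * (a * x ^ (2 ^ r) ^ 2 + a ^ (2 ^ r) ^ 2 * x) ^ 2 ^ r +
          μ * (a * x ^ 2 ^ r + a ^ 2 ^ r * x) = 0} =
      (fun y => a * y) '' {y : GaloisField 2 (3 * r) | y ^ (2 ^ r) = y} := by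
    ext x
    simp only [Set.mem_setOf_eq, Set.mem_image, key x]
    constructor
    · intro h
      have hA : a * x ^ 2 ^ r + a ^ 2 ^ r * x = 0 := by
        rcases mul_eq_zero.mp h with h' | h'
        · exact absurd h' hc
        · exact h'
      have hx : a * x ^ 2 ^ r = a ^ 2 ^ r * x := by
        have := add_eq_zero_iff_eq_neg.mp hA
        rwa [CharTwo.neg_eq] at this
      have haq : a ^ 2 ^ r ≠ 0 := pow_ne_zero _ ha
      refine ⟨a⁻¹ * x, ?_, by rw [← mul_assoc, mul_inv_cancel₀ ha, one_mul]⟩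
      show (a⁻¹ * x) ^ 2 ^ r = a⁻¹ * x
      rw [mul_pow, inv_pow]
      field_simp
      linear_combination hx
    · rintro ⟨y, hy, rfl⟩
      have hz : a * (a * y) ^ 2 ^ r + a ^ 2 ^ r * (a * y) = 0 := by
        rw [mul_pow, hy]
        calc a * (a ^ 2 ^ r * y) + a ^ 2 ^ r * (a * y)
            = a ^ 2 ^ r * (a * y) + a ^ 2 ^ r * (a * y) := by ring
          _ = 0 := CharTwo.add_self_eq_zero _
      rw [hz, mul_zero]
  refine ⟨fun x => by rw [key x], hset, ?_⟩
  rw [hset, Set.ncard_image_of_injective _ (mul_right_injective₀ ha)]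
  exact card_fixed_pow (GaloisField 2 (3 * r)) (2 ^ r) hq2 hcard
end
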